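/- (The reduced network generates the lumped Markov chain.) Let R be a reaction network over a species type S, ≈ a species equivalence for R with multiset lifting ≈ₗ, f a representative map for ≈, and R̂ the reduced network of R by f. Then for every state σ and every ≈ₗ-equivalence class M̃, it holds that q_R[σ, M̃] = q_{R̂}(f(σ), f(M̃)), where q_R denotes transition rates of the Markov chain of R and q_{R̂} those of the Markov chain of R̂ (with the convention q(θ,θ) = −∑_{θ'≠θ} q(θ,θ') in both chains). -/

import Mathlib

open Classical

noncomputable section

/-- A reaction of a stochastic mass-action network:
reagent multiset, kinetic parameter, product multiset. -/
structure Reaction (S : Type*) where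
  reag : Multiset S
  rate : ℝ
  prod : Multiset S

variable {S : Type*}

/-- `classCount sd s σ` is the cumulative multiplicity in `σ` of the species in the
≈-equivalence class of `s` (every ≈-class is of this form). -/
def classCount (sd : Setoid S) (s : S) (σ : Multiset S) : ℕ :=
  (σ.filter (sd.r s)).card

/-- The multiset lifting `≈ₗ` of an equivalence relation `≈` on species:
two multisets are related iff they have the same cumulative multiplicity
of every ≈-equivalence class. -/
def mlift (sd : Setoid S) (σ σ' : Multiset S) : Prop :=
  ∀ s : S, classCount sd s σ = classCount sd s σ'

/-- Cumulative multiplicity in `σ` of an ≈-equivalence class given as an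
element of the quotient. -/
def classCountQ (sd : Setoid S) (H : Quotient sd) (σ : Multiset S) : ℕ :=
  (σ.filter (fun x => Quotient.mk sd x = H)).card

/-- The multiset lifting is itself an equivalence relation on multisets. -/
def mliftSetoid (sd : Setoid S) : Setoid (Multiset S) :=
  ⟨mlift sd, ⟨fun _ _ => rfl, fun h s => (h s).symm, fun h1 h2 s => (h1 s).trans (h2 s)⟩⟩

/-- The set of reagent multisets of a reaction network. -/
def Reags (R : Finset (Reaction S)) : Finset (Multiset S) := R.image Reaction.reag

/-- The set of product multisets of a reaction network. -/
def Prods (R : Finset (Reaction S)) : Finset (Multiset S) := R.image Reaction.prod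

/-- Sum of the kinetic parameters of all reactions with reagents `ρ` and products `π`. -/
def rrOff (R : Finset (Reaction S)) (ρ π : Multiset S) : ℝ :=
  ∑ x ∈ R.filter (fun x => x.reag = ρ ∧ x.prod = π), x.rate

/-- The reaction rate `rr(ρ,π)`: the sum of the kinetic parameters of the reactions from
`ρ` to `π` when `ρ ≠ π`, with diagonal correction `rr(ρ,ρ) = -∑_{π' ∈ Prod(R), π' ≠ ρ} rr(ρ,π')`. -/
def rr (R : Finset (Reaction S)) (ρ π : Multiset S) : ℝ :=
  if ρ = π then -∑ π' ∈ (Prods R).erase ρ, rrOff R ρ π'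
  else rrOff R ρ π

/-- Cumulative reaction rate `rr[ρ,B] = ∑_{π ∈ B ∩ (Prod(R) ∪ {ρ})} rr(ρ,π)`. -/
def rrSet (R : Finset (Reaction S)) (ρ : Multiset S) (B : Set (Multiset S)) : ℝ :=
  ∑ π ∈ (insert ρ (Prods R)).filter (· ∈ B), rr R ρ π

/-- Mass-action propensity of a reaction in state `σ`. -/
def propensity (σ : Multiset S) (x : Reaction S) : ℝ :=
  x.rate * ∏ s ∈ x.reag.toFinset, ((σ.count s).choose (x.reag.count s) : ℝ)

/-- Sum of the propensities in `σ` of all reactions leading from state `σ` to state `θ`. -/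
def qOff (R : Finset (Reaction S)) (σ θ : Multiset S) : ℝ :=
  ∑ x ∈ R.filter (fun x => x.reag ≤ σ ∧ σ - x.reag + x.prod = θ), propensity σ x

/-- The (finitely many) states reachable from `σ` in one reaction. -/
def succs (R : Finset (Reaction S)) (σ : Multiset S) : Finset (Multiset S) :=
  (R.filter (fun x => x.reag ≤ σ)).image (fun x => σ - x.reag + x.prod)

/-- CTMC transition rate `q(σ,θ)` of the Markov chain of the network, with the
convention `q(σ,σ) = -∑_{θ ≠ σ} q(σ,θ)`. -/
def q (R : Finset (Reaction S)) (σ θ : Multiset S) : ℝ :=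
  if σ = θ then -∑ θ' ∈ (succs R σ).erase σ, qOff R σ θ'
  else qOff R σ θ

/-- Aggregate transition rate `q[σ,B] = ∑_{θ ∈ B} q(σ,θ)` (finitely many nonzero terms). -/
def qSet (R : Finset (Reaction S)) (σ : Multiset S) (B : Set (Multiset S)) : ℝ :=
  ∑ θ ∈ (insert σ (succs R σ)).filter (· ∈ B), q R σ θ

/-- All kinetic parameters of the network are positive. -/
def posRates (R : Finset (Reaction S)) : Prop := ∀ x ∈ R, 0 < x.rate

/-- Species equivalence (SE): for all related species `s ≈ s'`, every context `ρ` with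
`s+ρ` or `s'+ρ` a reagent multiset of `R`, and every ≈ₗ-class containing at least one
product multiset (represented by `π₀ ∈ Prod(R)`), the cumulative reaction rates agree. -/
def isSE (sd : Setoid S) (R : Finset (Reaction S)) : Prop :=
  ∀ s s' : S, sd.r s s' → ∀ ρ : Multiset S,
    ((s ::ₘ ρ) ∈ Reags R ∨ (s' ::ₘ ρ) ∈ Reags R) →
    ∀ π₀ ∈ Prods R,
      rrSet R (s ::ₘ ρ) {π | mlift sd π₀ π} = rrSet R (s' ::ₘ ρ) {π | mlift sd π₀ π}

/-- `f` is a representative map for the equivalence `sd`. -/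
def IsRep (sd : Setoid S) (f : S → S) : Prop :=
  (∀ s : S, sd.r (f s) s) ∧ ∀ s s' : S, sd.r s s' → f s = f s'

/-- The reduced reaction network of `R` by the representative map `f`: one reaction
`(ρ̂, β, π̂)` for each pair `(ρ̂, π̂)` with `ρ̂ ∈ Reag(R)`, `f(ρ̂) = ρ̂`, `f(π̂) = π̂` and
`β = ∑ { α | (ρ̂,α,π) ∈ R, f(π) = π̂ }` positive. -/
def reduced (R : Finset (Reaction S)) (f : S → S) : Finset (Reaction S) :=
  ((((R.image (fun x => (x.reag, x.prod.map f))).filter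
      (fun p => p.1.map f = p.1)).image
    (fun p => (⟨p.1, ∑ x ∈ R.filter (fun x => x.reag = p.1 ∧ x.prod.map f = p.2), x.rate,
      p.2⟩ : Reaction S)))).filter (fun x => 0 < x.rate)

/-- SMB-reaction rate: sum of parameters with no diagonal correction. -/
def rrSMBSet (R : Finset (Reaction S)) (ρ : Multiset S) (B : Set (Multiset S)) : ℝ :=
  ∑ π ∈ (Prods R).filter (· ∈ B), rrOff R ρ π

/-- Syntactic Markovian bisimulation. -/
def isSMB (sd : Setoid S) (R : Finset (Reaction S)) : Prop :=
  ∀ s s' : S, sd.r s s' → ∀ ρ π₀ : Multiset S,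
    rrSMBSet R (s ::ₘ ρ) {π | mlift sd π₀ π} = rrSMBSet R (s' ::ₘ ρ) {π | mlift sd π₀ π}

/-! The aggregate rates are values of the generator
`𝓛 F (σ) = ∑ₓ prop_σ(x) (F(σ - ρₓ + πₓ) - F(σ))`: `q[σ, B] = 𝓛 1_B (σ)`, and the class `M̃` is
the preimage of `{f(M̃)}` under `f`. So it suffices that `𝓛_R (F ∘ f) (σ) = 𝓛_R̂ F (f σ)` for
every observable `F`. Propensities count the sub-multisets `ρ ≤ σ` equal to the reagents, and the
sub-multisets of `f σ` are the images `f ρ`, so both sides become sums over `ρ ≤ σ`: of the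
outflow of `ρ`, resp. of `f ρ`, towards `F(fσ - fρ + f π) - F(fσ)`. Species equivalence says that
the outflow of `ρ` into any ≈ₗ-class is unchanged when one species of `ρ` is replaced by an
equivalent one, hence when `ρ` is replaced by `f ρ`; the class of `ρ` itself does not contribute,
as `F(fσ - fρ + fρ) - F(fσ) = 0`. -/

theorem Finset.sum_count_smul_eq_sum_map {ι α M : Type*} [DecidableEq α] [AddCommMonoid M]
    (s : Finset ι) (k : ι → α) (m : Multiset α) (h : ι → α → M) :
    ∑ i ∈ s, m.count (k i) • h i (k i) = (m.map fun a => ∑ i ∈ s.filter (k · = a), h i a).sum := by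
  induction m using Multiset.induction with
  | empty => simp
  | cons a m ih =>
    simp only [Multiset.count_cons, add_smul, Finset.sum_add_distrib, ih, Multiset.map_cons,
      Multiset.sum_cons, ite_smul, one_smul, zero_smul, ← Finset.sum_filter, add_comm]
    congr 1
    exact Finset.sum_congr rfl fun i hi => by rw [(Finset.mem_filter.1 hi).2]

theorem Multiset.powerset_map {β : Type*} (f : S → β) (σ : Multiset S) :
    (σ.map f).powerset = σ.powerset.map (Multiset.map f) := by
  induction σ using Multiset.induction with
  | empty => simp
  | cons a σ ih =>
    simp only [Multiset.map_cons, Multiset.powerset_cons, ih, Multiset.map_add, Multiset.map_map,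
      Function.comp_def]

theorem Multiset.map_tsub_add_of_le {β : Type*} [DecidableEq β] (f : S → β) {ρ σ : Multiset S}
    (π : Multiset S) (h : ρ ≤ σ) : (σ - ρ + π).map f = σ.map f - ρ.map f + π.map f := by
  obtain ⟨δ, rfl⟩ := le_iff_exists_add.1 h
  simp only [add_tsub_cancel_left, Multiset.map_add]

theorem Multiset.count_powerset (σ ρ : Multiset S) {A : Finset S} (hA : ρ.toFinset ⊆ A) :
    σ.powerset.count ρ = ∏ s ∈ A, (σ.count s).choose (ρ.count s) := by
  induction σ using Multiset.induction generalizing ρ with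
  | empty =>
    rcases eq_or_ne ρ 0 with rfl | hρ
    · simp
    · obtain ⟨a, ha⟩ := Multiset.exists_mem_of_ne_zero hρ
      rw [Finset.prod_eq_zero (hA (Multiset.mem_toFinset.2 ha))
        (Nat.choose_eq_zero_of_lt (by simpa using Multiset.count_pos.2 ha))]
      simp [hρ]
  | cons a σ ih =>
    rw [Multiset.powerset_cons, Multiset.count_add, ih ρ hA]
    by_cases ha : a ∈ ρ
    · obtain ⟨k, hk⟩ := Nat.exists_eq_add_one.2 (Multiset.count_pos.2 ha)
      have hsub : (ρ.erase a).toFinset ⊆ A :=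
        (Multiset.toFinset_subset.2 (Multiset.erase_subset a ρ)).trans hA
      have haA : a ∈ A := hA (Multiset.mem_toFinset.2 ha)
      rw [← Multiset.cons_erase ha,
        Multiset.count_map_eq_count' _ _ fun _ _ => (Multiset.cons_inj_right a).1,
        Multiset.cons_erase ha, ih _ hsub, ← Finset.mul_prod_erase A _ haA,
        ← Finset.mul_prod_erase A _ haA, ← Finset.mul_prod_erase A _ haA,
        Multiset.count_cons_self, Multiset.count_erase_self, hk, Nat.add_sub_cancel,
        Nat.choose_succ_succ']
      have hrest : ∀ s ∈ A.erase a,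
          (σ.count s).choose ((ρ.erase a).count s) = (σ.count s).choose (ρ.count s) ∧
          ((a ::ₘ σ).count s).choose (ρ.count s) = (σ.count s).choose (ρ.count s) := fun s hs =>
        ⟨by rw [Multiset.count_erase_of_ne (Finset.ne_of_mem_erase hs)],
          by rw [Multiset.count_cons_of_ne (Finset.ne_of_mem_erase hs)]⟩
      rw [Finset.prod_congr rfl fun s hs => (hrest s hs).1,
        Finset.prod_congr rfl fun s hs => (hrest s hs).2]
      ring
    · have hnot : ρ ∉ σ.powerset.map (Multiset.cons a) := fun h => by
        obtain ⟨τ, -, rfl⟩ := Multiset.mem_map.1 h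
        exact ha (Multiset.mem_cons_self a τ)
      rw [Multiset.count_eq_zero.2 hnot, add_zero]
      refine Finset.prod_congr rfl fun s _ => ?_
      by_cases hs : s = a
      · subst hs; simp [Multiset.count_eq_zero.2 ha]
      · rw [Multiset.count_cons_of_ne hs]

theorem propensity_eq_rate_mul_count (σ : Multiset S) (x : Reaction S) :
    propensity σ x = x.rate * σ.powerset.count x.reag := by
  rw [propensity, Multiset.count_powerset σ x.reag subset_rfl]
  push_cast
  rfl

theorem propensity_eq_zero_of_not_le {σ : Multiset S} {x : Reaction S} (h : ¬ x.reag ≤ σ) :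
    propensity σ x = 0 := by
  rw [propensity_eq_rate_mul_count, Multiset.count_eq_zero.2 (mt Multiset.mem_powerset.1 h),
    Nat.cast_zero, mul_zero]

section Representative

variable {sd : Setoid S} {f : S → S}

theorem IsRep.eq_iff (hf : IsRep sd f) {s s' : S} : f s = f s' ↔ sd.r s s' :=
  ⟨fun h => sd.iseqv.trans (sd.iseqv.symm (hf.1 s)) (h ▸ hf.1 s'), hf.2 s s'⟩

theorem IsRep.map_map (hf : IsRep sd f) (σ : Multiset S) : (σ.map f).map f = σ.map f := by
  rw [Multiset.map_map]
  exact Multiset.map_congr rfl fun s _ => hf.2 _ _ (hf.1 s)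

theorem IsRep.map_eq_self_of_le (hf : IsRep sd f) {σ τ : Multiset S} (h : τ ≤ σ.map f) :
    τ.map f = τ := by
  refine (Multiset.map_congr rfl fun a ha => ?_).trans (Multiset.map_id τ)
  obtain ⟨s, -, rfl⟩ := Multiset.mem_map.1 (Multiset.mem_of_le h ha)
  exact hf.2 _ _ (hf.1 s)

theorem IsRep.classCount_eq (hf : IsRep sd f) (s : S) (σ : Multiset S) :
    classCount sd s σ = (σ.map f).count (f s) := by
  rw [classCount, Multiset.count_map]
  congr 1
  exact Multiset.filter_congr fun _ _ => hf.eq_iff.symm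

theorem IsRep.mlift_iff (hf : IsRep sd f) {σ σ' : Multiset S} :
    mlift sd σ σ' ↔ σ.map f = σ'.map f := by
  simp only [mlift, hf.classCount_eq]
  refine ⟨fun h => Multiset.ext.2 fun b => ?_, fun h s => by rw [h]⟩
  by_cases hb : ∃ s, f s = b
  · obtain ⟨s, rfl⟩ := hb
    exact h s
  · have hnot : ∀ τ : Multiset S, b ∉ τ.map f := fun τ hm => by
      obtain ⟨s, -, hs⟩ := Multiset.mem_map.1 hm
      exact hb ⟨s, hs⟩
    rw [Multiset.count_eq_zero.2 (hnot σ), Multiset.count_eq_zero.2 (hnot σ')]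

end Representative

/-- The rate `β` of the reduced reaction `ρ → π'` (products compared up to `f`). -/
def lumpedRate (R : Finset (Reaction S)) (f : S → S) (ρ π' : Multiset S) : ℝ :=
  ∑ x ∈ R.filter (fun x => x.reag = ρ ∧ x.prod.map f = π'), x.rate

section SpeciesEquivalence

variable {sd : Setoid S} {f : S → S} {R : Finset (Reaction S)}

theorem rrSet_eq_zero_of_notMem_reags {ρ : Multiset S} (h : ρ ∉ Reags R)
    (B : Set (Multiset S)) : rrSet R ρ B = 0 := by
  have hoff : ∀ π, rrOff R ρ π = 0 := fun π =>
    Finset.sum_eq_zero fun x hx =>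
      absurd (Finset.mem_image.2 ⟨x, (Finset.mem_filter.1 hx).1, (Finset.mem_filter.1 hx).2.1⟩) h
  refine Finset.sum_eq_zero fun π _ => ?_
  unfold rr
  split_ifs <;> simp [hoff]

theorem rrSet_eq_sum_rate {ρ : Multiset S} {B : Set (Multiset S)} (h : ρ ∉ B) :
    rrSet R ρ B = ∑ x ∈ R.filter (fun x => x.reag = ρ ∧ x.prod ∈ B), x.rate := by
  rw [rrSet, Finset.filter_insert, if_neg h]
  calc ∑ π ∈ (Prods R).filter (· ∈ B), rr R ρ π
      = ∑ π ∈ (Prods R).filter (· ∈ B), ∑ x ∈ (R.filter (·.reag = ρ)).filter (·.prod = π),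
          x.rate := by
        refine Finset.sum_congr rfl fun π hπ => ?_
        have hne : ρ ≠ π := fun e => h (e ▸ (Finset.mem_filter.1 hπ).2)
        rw [rr, if_neg hne, rrOff, Finset.filter_filter]
    _ = _ := by
        rw [Finset.sum_fiberwise_eq_sum_filter, Finset.filter_filter]
        refine Finset.sum_congr (Finset.filter_congr fun x hx => ?_) fun _ _ => rfl
        simp [Prods, Finset.mem_image_of_mem _ hx]

theorem rrSet_cons_congr (hse : isSE sd R) {π₀ : Multiset S} (hπ₀ : π₀ ∈ Prods R) {s s' : S}
    (hs : sd.r s s') (ρ : Multiset S) :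
    rrSet R (s ::ₘ ρ) {π | mlift sd π₀ π} = rrSet R (s' ::ₘ ρ) {π | mlift sd π₀ π} := by
  by_cases hR : (s ::ₘ ρ) ∈ Reags R ∨ (s' ::ₘ ρ) ∈ Reags R
  · exact hse s s' hs ρ hR π₀ hπ₀
  · rw [not_or] at hR
    rw [rrSet_eq_zero_of_notMem_reags hR.1, rrSet_eq_zero_of_notMem_reags hR.2]

theorem rrSet_map (hse : isSE sd R) (hf : IsRep sd f) {π₀ : Multiset S} (hπ₀ : π₀ ∈ Prods R)
    (ρ : Multiset S) :
    rrSet R (ρ.map f) {π | mlift sd π₀ π} = rrSet R ρ {π | mlift sd π₀ π} := by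
  suffices h : ∀ ν,
      rrSet R (ρ.map f + ν) {π | mlift sd π₀ π} = rrSet R (ρ + ν) {π | mlift sd π₀ π} by
    simpa using h 0
  induction ρ using Multiset.induction with
  | empty => simp
  | cons a ρ ih =>
    intro ν
    rw [Multiset.map_cons, Multiset.cons_add, rrSet_cons_congr hse hπ₀ (hf.1 a),
      ← Multiset.add_cons, ih, Multiset.add_cons, Multiset.cons_add]

theorem lumpedRate_map (hse : isSE sd R) (hf : IsRep sd f) {ρ π' : Multiset S}
    (h : ρ.map f ≠ π') : lumpedRate R f (ρ.map f) π' = lumpedRate R f ρ π' := by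
  by_cases hπ : ∃ π₀ ∈ Prods R, π₀.map f = π'
  · obtain ⟨π₀, hπ₀, rfl⟩ := hπ
    have key : ∀ τ : Multiset S, τ.map f ≠ π₀.map f →
        lumpedRate R f τ (π₀.map f) = rrSet R τ {π | mlift sd π₀ π} := fun τ hτ => by
      rw [rrSet_eq_sum_rate (by simpa [hf.mlift_iff] using Ne.symm hτ), lumpedRate]
      refine Finset.sum_congr (Finset.filter_congr fun x _ => ?_) fun _ _ => rfl
      simp [hf.mlift_iff, eq_comm]
    rw [key _ (by rwa [hf.map_map]), key _ h, rrSet_map hse hf hπ₀]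
  · have hzero : ∀ τ, lumpedRate R f τ π' = 0 := fun τ =>
      Finset.sum_eq_zero fun x hx => absurd
        ⟨x.prod, Finset.mem_image_of_mem _ (Finset.mem_filter.1 hx).1,
          (Finset.mem_filter.1 hx).2.2⟩ hπ
    rw [hzero, hzero]

end SpeciesEquivalence

section Lumping

variable {sd : Setoid S} {f : S → S} {R : Finset (Reaction S)}

theorem sum_rate_mul_eq_sum_lumpedRate (ρ : Multiset S) (G : Multiset S → ℝ) :
    ∑ x ∈ R.filter (·.reag = ρ), x.rate * G (x.prod.map f)
      = ∑ π' ∈ R.image (·.prod.map f), G π' * lumpedRate R f ρ π' := by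
  rw [← Finset.sum_fiberwise_of_maps_to (t := R.image (·.prod.map f))
    fun x hx => Finset.mem_image_of_mem _ (Finset.mem_filter.1 hx).1]
  refine Finset.sum_congr rfl fun π' _ => ?_
  rw [lumpedRate, Finset.mul_sum, Finset.filter_filter]
  exact Finset.sum_congr rfl fun x hx => by rw [(Finset.mem_filter.1 hx).2.2, mul_comm]

theorem sum_rate_mul_map_reag (hse : isSE sd R) (hf : IsRep sd f) (ρ : Multiset S)
    {G : Multiset S → ℝ} (hG : G (ρ.map f) = 0) :
    ∑ x ∈ R.filter (·.reag = ρ.map f), x.rate * G (x.prod.map f)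
      = ∑ x ∈ R.filter (·.reag = ρ), x.rate * G (x.prod.map f) := by
  rw [sum_rate_mul_eq_sum_lumpedRate (ρ.map f) G, sum_rate_mul_eq_sum_lumpedRate ρ G]
  refine Finset.sum_congr rfl fun π' _ => ?_
  by_cases h : ρ.map f = π'
  · rw [← h, hG, zero_mul, zero_mul]
  · rw [lumpedRate_map hse hf h]

theorem lumpedRate_nonneg (hpos : posRates R) (ρ π' : Multiset S) :
    0 ≤ lumpedRate R f ρ π' :=
  Finset.sum_nonneg fun x hx => (hpos x (Finset.mem_filter.1 hx).1).le

theorem sum_reduced (hpos : posRates R) (H : Multiset S → Multiset S → ℝ) :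
    ∑ y ∈ reduced R f, y.rate * H y.reag y.prod
      = ∑ x ∈ R.filter (fun x => x.reag.map f = x.reag), x.rate * H x.reag (x.prod.map f) := by
  set P := (R.image fun x => (x.reag, x.prod.map f)).filter (fun p => p.1.map f = p.1)
  let mk : Multiset S × Multiset S → Reaction S := fun p => ⟨p.1, lumpedRate R f p.1 p.2, p.2⟩
  have hred : reduced R f = (P.image mk).filter (0 < ·.rate) := rfl
  have hmk : Set.InjOn mk P := fun p _ p' _ h =>
    Prod.ext (congrArg Reaction.reag h) (congrArg Reaction.prod h)
  calc ∑ y ∈ reduced R f, y.rate * H y.reag y.prod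
      = ∑ p ∈ P, lumpedRate R f p.1 p.2 * H p.1 p.2 := by
        rw [hred, Finset.sum_filter_of_ne, Finset.sum_image hmk]
        intro y hy hne
        obtain ⟨p, -, rfl⟩ := Finset.mem_image.1 hy
        exact (lumpedRate_nonneg hpos _ _).lt_of_ne (left_ne_zero_of_mul hne).symm
    _ = ∑ p ∈ P, ∑ x ∈ R.filter (fun x => (x.reag, x.prod.map f) = p),
          x.rate * H x.reag (x.prod.map f) := by
        refine Finset.sum_congr rfl fun p _ => ?_
        simp only [lumpedRate, Finset.sum_mul, Prod.ext_iff]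
        exact Finset.sum_congr rfl fun x hx => by
          obtain ⟨-, h1, h2⟩ := Finset.mem_filter.1 hx
          rw [h1, h2]
    _ = _ := by
        rw [Finset.sum_fiberwise_eq_sum_filter]
        refine Finset.sum_congr (Finset.filter_congr fun x hx => ?_) fun _ _ => rfl
        simp [P, Finset.mem_image_of_mem _ hx]

end Lumping

def generator (R : Finset (Reaction S)) (F : Multiset S → ℝ) (σ : Multiset S) : ℝ :=
  ∑ x ∈ R, propensity σ x * (F (σ - x.reag + x.prod) - F σ)

section Generator

variable {R : Finset (Reaction S)} {σ : Multiset S}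

theorem sum_qOff_mul {U : Finset (Multiset S)} (hU : succs R σ ⊆ U) (g : Multiset S → ℝ) :
    ∑ θ ∈ U, qOff R σ θ * g θ = ∑ x ∈ R, propensity σ x * g (σ - x.reag + x.prod) := by
  calc ∑ θ ∈ U, qOff R σ θ * g θ
      = ∑ x ∈ R.filter (fun x : Reaction S => x.reag ≤ σ),
          propensity σ x * g (σ - x.reag + x.prod) := by
        rw [← Finset.sum_fiberwise_of_maps_to (t := U)
          (g := fun x : Reaction S => σ - x.reag + x.prod)
          fun x hx => hU (Finset.mem_image_of_mem _ hx)]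
        refine Finset.sum_congr rfl fun θ _ => ?_
        rw [qOff, Finset.sum_mul, Finset.filter_filter]
        exact Finset.sum_congr rfl fun x hx => by rw [(Finset.mem_filter.1 hx).2.2]
    _ = _ := Finset.sum_filter_of_ne fun x _ hne =>
        of_not_not fun h => left_ne_zero_of_mul hne (propensity_eq_zero_of_not_le h)

theorem qSet_eq_generator (B : Set (Multiset S)) :
    qSet R σ B = generator R (B.indicator 1) σ := by
  set U := insert σ (succs R σ)
  have hq : ∀ θ, (if θ ∈ B then q R σ θ else 0) = (if θ ∈ B then qOff R σ θ else 0) -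
      if σ = θ then B.indicator 1 σ * ∑ θ' ∈ U, qOff R σ θ' else 0 := by
    intro θ
    rcases eq_or_ne σ θ with rfl | h
    · rw [q, if_pos rfl, if_pos rfl, ← Finset.erase_insert_eq_erase,
        Finset.sum_erase_eq_sub (Finset.mem_insert_self _ _)]
      by_cases hσ : σ ∈ B <;> simp [hσ, U]
    · rw [q, if_neg h, if_neg h, sub_zero]
  rw [generator, ← sum_qOff_mul (Finset.subset_insert σ (succs R σ))
      fun θ => B.indicator 1 θ - B.indicator 1 σ, qSet, Finset.sum_filter,
    Finset.sum_congr rfl fun θ _ => hq θ, Finset.sum_sub_distrib,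
    Finset.sum_ite_eq _ _ _, if_pos (Finset.mem_insert_self σ _)]
  simp_rw [mul_sub, Finset.sum_sub_distrib, ← Finset.sum_mul, mul_comm (B.indicator 1 σ)]
  congr 1
  refine Finset.sum_congr rfl fun θ _ => ?_
  by_cases h : θ ∈ B <;> simp [h]

theorem qSet_singleton (θ : Multiset S) : qSet R σ {θ} = q R σ θ := by
  simp only [qSet, Set.mem_singleton_iff, Finset.filter_eq']
  split_ifs with h
  · exact Finset.sum_singleton _ _
  · obtain ⟨hσ, hs⟩ := not_or.1 (Finset.mem_insert.not.1 h)
    rw [Finset.sum_empty, q, if_neg (Ne.symm hσ), qOff]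
    refine (Finset.sum_eq_zero fun x hx => ?_).symm
    obtain ⟨hxR, hle, rfl⟩ := Finset.mem_filter.1 hx
    exact (hs (Finset.mem_image_of_mem (fun x : Reaction S => σ - x.reag + x.prod)
      (Finset.mem_filter.2 ⟨hxR, hle⟩))).elim

end Generator

theorem generator_comp_map {sd : Setoid S} {R : Finset (Reaction S)} (hpos : posRates R)
    (hse : isSE sd R) {f : S → S} (hf : IsRep sd f) (F : Multiset S → ℝ) (σ : Multiset S) :
    generator R (F ∘ Multiset.map f) σ = generator (reduced R f) F (σ.map f) := by
  let Δ : Multiset S → Multiset S → ℝ := fun ρ π => F (σ.map f - ρ + π) - F (σ.map f)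
  calc generator R (F ∘ Multiset.map f) σ
      = ∑ x ∈ R, σ.powerset.count x.reag • (x.rate * Δ (x.reag.map f) (x.prod.map f)) := by
        refine Finset.sum_congr rfl fun x _ => ?_
        rw [propensity_eq_rate_mul_count, nsmul_eq_mul]
        by_cases h : x.reag ≤ σ
        · simp only [Function.comp, Multiset.map_tsub_add_of_le f _ h, Δ]
          ring
        · simp [Multiset.count_eq_zero.2 (mt Multiset.mem_powerset.1 h)]
    _ = (σ.powerset.map fun ρ => ∑ x ∈ R.filter (·.reag = ρ.map f),
          x.rate * Δ (ρ.map f) (x.prod.map f)).sum := by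
        refine (Finset.sum_count_smul_eq_sum_map R Reaction.reag σ.powerset
          fun x ρ => x.rate * Δ (ρ.map f) (x.prod.map f)).trans ?_
        refine congrArg _ (Multiset.map_congr rfl fun ρ hρ => ?_)
        refine (sum_rate_mul_map_reag hse hf ρ ?_).symm
        simp [Δ, tsub_add_cancel_of_le (Multiset.map_le_map (Multiset.mem_powerset.1 hρ))]
    _ = ∑ x ∈ R, (σ.map f).powerset.count x.reag • (x.rate * Δ x.reag (x.prod.map f)) := by
        rw [Multiset.powerset_map]
        refine Eq.symm ((Finset.sum_count_smul_eq_sum_map R Reaction.reag _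
          fun x ρ => x.rate * Δ ρ (x.prod.map f)).trans ?_)
        rw [Multiset.map_map]
        rfl
    _ = ∑ x ∈ R.filter (fun x => x.reag.map f = x.reag),
          x.rate * ((σ.map f).powerset.count x.reag • Δ x.reag (x.prod.map f)) := by
        rw [Finset.sum_filter_of_ne]
        · exact Finset.sum_congr rfl fun x _ => (mul_smul_comm _ _ _).symm
        · intro x _ hne
          exact hf.map_eq_self_of_le (Multiset.mem_powerset.1
            (Multiset.count_ne_zero.1 (left_ne_zero_of_smul (right_ne_zero_of_mul hne))))
    _ = ∑ y ∈ reduced R f, y.rate * ((σ.map f).powerset.count y.reag • Δ y.reag y.prod) :=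
        (sum_reduced hpos fun ρ π => (σ.map f).powerset.count ρ • Δ ρ π).symm
    _ = generator (reduced R f) F (σ.map f) := by
        refine Finset.sum_congr rfl fun y _ => ?_
        rw [propensity_eq_rate_mul_count, nsmul_eq_mul, mul_assoc]

/-- the reduced network generates the lumped Markov chain: for a species
equivalence `sd`, a representative map `f` and the reduced network `R̂`, for every state `σ`
and every ≈ₗ-class `M̃` (represented by `π₀`), `q_R[σ, M̃] = q_R̂(f(σ), f(M̃))`. -/
theorem qSet_eq_q_reduced (sd : Setoid S) (R : Finset (Reaction S)) (hpos : posRates R)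
    (hse : isSE sd R) (f : S → S) (hf : IsRep sd f) :
    ∀ σ π₀ : Multiset S,
      qSet R σ {θ | mlift sd π₀ θ} = q (reduced R f) (σ.map f) (π₀.map f) := by
  intro σ π₀
  have hclass : {θ | mlift sd π₀ θ}.indicator (1 : Multiset S → ℝ)
      = ({π₀.map f} : Set (Multiset S)).indicator 1 ∘ Multiset.map f := by
    ext θ
    simp [Set.indicator_apply, hf.mlift_iff, Pi.single_apply, eq_comm]
  rw [← qSet_singleton, qSet_eq_generator, qSet_eq_generator, hclass,
    generator_comp_map hpos hse hf]

end
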